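/- arXiv:1511.01821 — 3 statements merged into one kernel-verified Lean document; each statement's English description precedes it below -/
import Mathlib

section
/- Fix a constant L > 0, a finite nonempty index set N with |N| = m, admissible functions h_i : ℝ → ℝ for i ∈ N, and a nonempty closed convex set 𝒳 ⊆ ℝ. Let β be a real number with β ≤ 1/m and let γ be a natural number with γ ≤ m. Then the set Y(β,γ) is convex and closed. -/
/-!
In dimension one a convex set is an order-connected one. Let `x₁ < z < x₂` be constrained
minimizers for valid weights `v₁`, `v₂`. By convexity, the derivative at `z` of the
`v₁`-objective is `≥ 0` and that of the `v₂`-objective is `≤ 0`. The uniform weight `1/m` is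
`≥ β` at every index, so mixing it into any valid weight keeps the weight valid; since the
derivative at `z` is linear in the weight, one of the mixtures with `v₁` or `v₂` has derivative
`0` at `z`, which makes `z` a global, hence constrained, minimizer.

Closedness: weights may be taken zero off `N`, so they range over a compact set, and `Y(β,γ)` is
the projection along that compact factor of the closed set of pairs (weight, minimizer).
-/

/-- A function `h : ℝ → ℝ` is admissible with constant `L > 0` if it is convex,
continuously differentiable, its derivative is bounded by `L` and `L`-Lipschitz,
and its set of unconstrained global minimizers is nonempty and compact. -/
def Admissible (L : ℝ) (h : ℝ → ℝ) : Prop :=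
  ConvexOn ℝ Set.univ h ∧ ContDiff ℝ 1 h ∧
    (∀ x : ℝ, |deriv h x| ≤ L) ∧ LipschitzWith L.toNNReal (deriv h) ∧
    {x : ℝ | ∀ y : ℝ, h x ≤ h y}.Nonempty ∧ IsCompact {x : ℝ | ∀ y : ℝ, h x ≤ h y}

/-- A weight vector `α` over the index set `N` is `(β,γ)`-valid if all weights
are nonnegative, they sum to `1`, and at least `γ` indices in `N` have weight
at least `β`. -/
def ValidWeight {ι : Type*} (N : Finset ι) (β : ℝ) (γ : ℕ) (α : ι → ℝ) : Prop :=
  (∀ i ∈ N, 0 ≤ α i) ∧ (∑ i ∈ N, α i = 1) ∧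
    ∃ S ⊆ N, γ ≤ S.card ∧ ∀ i ∈ S, β ≤ α i

/-- `Y(β,γ)`: the union over all `(β,γ)`-valid weight vectors `α` of the set of
minimizers over the constraint set `𝒳` of `x ↦ ∑_{i∈N} α_i h_i(x)`. -/
def YSet {ι : Type*} (N : Finset ι) (h : ι → ℝ → ℝ) (X : Set ℝ) (β : ℝ) (γ : ℕ) : Set ℝ :=
  {x : ℝ | x ∈ X ∧ ∃ α : ι → ℝ, ValidWeight N β γ α ∧
    ∀ y ∈ X, ∑ i ∈ N, α i * h i x ≤ ∑ i ∈ N, α i * h i y}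


open Set

section WeightedSum

variable {ι : Type*} {N : Finset ι} {h : ι → ℝ → ℝ} {α : ι → ℝ}

lemma convexOn_weightedSum {S : Set ℝ} (hS : Convex ℝ S) (hα : ∀ i ∈ N, 0 ≤ α i)
    (hconv : ∀ i ∈ N, ConvexOn ℝ S (h i)) :
    ConvexOn ℝ S fun x => ∑ i ∈ N, α i * h i x := by
  have key : ConvexOn ℝ S (∑ i ∈ N, fun x => α i * h i x) :=
    Finset.sum_induction _ (ConvexOn ℝ S) (fun _ _ => ConvexOn.add) (convexOn_const 0 hS)
      fun i hi => (hconv i hi).smul (hα i hi)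
  simpa only [Finset.sum_fn] using key

lemma hasDerivAt_weightedSum {z : ℝ} (hdiff : ∀ i ∈ N, DifferentiableAt ℝ (h i) z) :
    HasDerivAt (fun x => ∑ i ∈ N, α i * h i x) (∑ i ∈ N, α i * deriv (h i) z) z :=
  HasDerivAt.fun_sum fun i hi => (hdiff i hi).hasDerivAt.const_mul (α i)

lemma continuous_weightedSum (hcont : ∀ i ∈ N, Continuous (h i)) :
    Continuous fun p : (ι → ℝ) × ℝ => ∑ i ∈ N, p.1 i * h i p.2 :=
  continuous_finsetSum _ fun i hi =>
    ((continuous_apply i).comp continuous_fst).mul ((hcont i hi).comp continuous_snd)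

end WeightedSum

namespace ConvexOn

variable {f : ℝ → ℝ} {S : Set ℝ} {x z f' : ℝ}

lemma isMinOn_of_hasDerivAt_eq_zero (hf : ConvexOn ℝ S f) (hz : z ∈ S)
    (hd : HasDerivAt f 0 z) : IsMinOn f S z := by
  intro y hy
  show f z ≤ f y
  rcases lt_trichotomy y z with hyz | rfl | hzy
  · have := hf.slope_le_of_hasDerivAt hy hz hyz hd
    rw [slope_def_field, div_le_iff₀ (sub_pos.2 hyz)] at this
    linarith
  · exact le_rfl
  · have := hf.le_slope_of_hasDerivAt hz hy hzy hd
    rw [slope_def_field, le_div_iff₀ (sub_pos.2 hzy)] at this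
    linarith

lemma nonneg_of_hasDerivAt_of_le (hf : ConvexOn ℝ S f) (hx : x ∈ S) (hz : z ∈ S) (hxz : x < z)
    (hle : f x ≤ f z) (hd : HasDerivAt f f' z) : 0 ≤ f' := by
  have := hf.slope_le_of_hasDerivAt hx hz hxz hd
  rw [slope_def_field] at this
  exact (div_nonneg (sub_nonneg.2 hle) (sub_pos.2 hxz).le).trans this

lemma nonpos_of_hasDerivAt_of_le (hf : ConvexOn ℝ S f) (hz : z ∈ S) (hx : x ∈ S) (hzx : z < x)
    (hle : f x ≤ f z) (hd : HasDerivAt f f' z) : f' ≤ 0 := by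
  have := hf.le_slope_of_hasDerivAt hz hx hzx hd
  rw [slope_def_field] at this
  exact this.trans (div_nonpos_of_nonpos_of_nonneg (sub_nonpos.2 hle) (sub_pos.2 hzx).le)

end ConvexOn

namespace ValidWeight

variable {ι : Type*} {N : Finset ι} {β : ℝ} {γ : ℕ} {α α' : ι → ℝ}

lemma congr (hα : ValidWeight N β γ α) (heq : ∀ i ∈ N, α' i = α i) : ValidWeight N β γ α' := by
  obtain ⟨hα₀, hα₁, S, hSN, hSγ, hSβ⟩ := hα
  refine ⟨fun i hi => (heq i hi).symm ▸ hα₀ i hi, ?_, S, hSN, hSγ,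
    fun i hi => (heq i (hSN hi)).symm ▸ hSβ i hi⟩
  rw [Finset.sum_congr rfl heq, hα₁]

lemma le_one (hα : ValidWeight N β γ α) {i : ι} (hi : i ∈ N) : α i ≤ 1 :=
  hα.2.1 ▸ Finset.single_le_sum hα.1 hi

lemma smul_add_smul (hα : ValidWeight N β γ α) {u : ι → ℝ} (hu₀ : ∀ i ∈ N, 0 ≤ u i)
    (hu₁ : ∑ i ∈ N, u i = 1) (huβ : ∀ i ∈ N, β ≤ u i) {a b : ℝ} (ha : 0 ≤ a) (hb : 0 ≤ b)
    (hab : a + b = 1) : ValidWeight N β γ (a • α + b • u) := by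
  obtain ⟨hα₀, hα₁, S, hSN, hSγ, hSβ⟩ := hα
  simp only [ValidWeight, Pi.add_apply, Pi.smul_apply, smul_eq_mul]
  refine ⟨fun i hi => ?_, ?_, S, hSN, hSγ, fun i hi => ?_⟩
  · have := hα₀ i hi; have := hu₀ i hi; positivity
  · rw [Finset.sum_add_distrib, ← Finset.mul_sum, ← Finset.mul_sum, hα₁, hu₁, mul_one, mul_one, hab]
  · calc β = a * β + b * β := by rw [← add_mul, hab, one_mul]
      _ ≤ a * α i + b * u i := by gcongr; exacts [hSβ i hi, huβ i (hSN hi)]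

lemma isClosed_setOf : IsClosed {α : ι → ℝ | ValidWeight N β γ α} := by
  have hdecomp : {α : ι → ℝ | ValidWeight N β γ α} = (⋂ i ∈ N, {α | 0 ≤ α i}) ∩
      ({α | ∑ i ∈ N, α i = 1} ∩
        ⋃ S ∈ N.powerset, {_α | γ ≤ S.card} ∩ ⋂ i ∈ S, {α | β ≤ α i}) := by
    ext α
    simp only [ValidWeight, mem_ofPred_eq, mem_inter_iff, mem_iInter, mem_iUnion,
      Finset.mem_powerset, exists_prop]
  have hcoord (c : ℝ) (i : ι) : IsClosed {α : ι → ℝ | c ≤ α i} :=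
    isClosed_le continuous_const (continuous_apply i)
  rw [hdecomp]
  exact (isClosed_biInter fun i _ => hcoord 0 i).inter
    ((isClosed_eq (continuous_finsetSum _ fun i _ => continuous_apply i) continuous_const).inter
      (isClosed_biUnion_finset fun S _ =>
        isClosed_const.inter (isClosed_biInter fun i _ => hcoord β i)))

end ValidWeight

section YSet

variable {ι : Type*} {N : Finset ι} {h : ι → ℝ → ℝ} {X : Set ℝ} {β : ℝ} {γ : ℕ}

theorem isClosed_YSet (hcont : ∀ i ∈ N, Continuous (h i)) (hX : IsClosed X) :
    IsClosed (YSet N h X β γ) := by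
  set K := {α : ι → ℝ | ValidWeight N β γ α} ∩ univ.pi fun _ => Icc (0 : ℝ) 1
  have : CompactSpace K := isCompact_iff_compactSpace.1
    ((isCompact_univ_pi fun _ => isCompact_Icc).inter_left ValidWeight.isClosed_setOf)
  set F := fun p : (ι → ℝ) × ℝ => ∑ i ∈ N, p.1 i * h i p.2
  have hF : Continuous fun p : K × ℝ => F (p.1, p.2) :=
    (continuous_weightedSum hcont).comp (by fun_prop)
  set G : Set (K × ℝ) := {p | p.2 ∈ X} ∩ ⋂ y ∈ X, {p | F (p.1, p.2) ≤ F (p.1, y)}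
  have hG : IsClosed G := (hX.preimage continuous_snd).inter <| isClosed_biInter fun y _ =>
    isClosed_le hF (hF.comp (continuous_fst.prodMk continuous_const))
  have hYG : YSet N h X β γ = Prod.snd '' G := by
    ext x
    constructor
    · rintro ⟨hx, α, hα, hmin⟩
      have hind : ∀ i ∈ N, (N : Set ι).indicator α i = α i := fun i hi => indicator_of_mem hi α
      refine ⟨(⟨(N : Set ι).indicator α, hα.congr hind, fun i _ => ?_⟩, x), ⟨hx, ?_⟩, rfl⟩
      · by_cases hi : i ∈ N
        · rw [hind i hi]; exact ⟨hα.1 i hi, hα.le_one hi⟩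
        · rw [indicator_of_notMem hi]; exact ⟨le_rfl, zero_le_one⟩
      · have hsum (w : ℝ) : ∑ i ∈ N, (N : Set ι).indicator α i * h i w = ∑ i ∈ N, α i * h i w :=
          Finset.sum_congr rfl fun i hi => by rw [hind i hi]
        simpa only [mem_iInter₂, mem_ofPred_eq, F, hsum] using hmin
    · rintro ⟨⟨⟨α, hα, _⟩, x⟩, hp, rfl⟩
      simp only [G, F, mem_inter_iff, mem_iInter₂, mem_ofPred_eq] at hp
      exact ⟨hp.1, α, hα, hp.2⟩
  rw [hYG]
  exact isClosedMap_snd_of_compactSpace G hG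

section Convexity

variable (hconv : ∀ i ∈ N, ConvexOn ℝ univ (h i)) (hdiff : ∀ i ∈ N, Differentiable ℝ (h i))
include hconv hdiff

lemma mem_YSet_of_sum_deriv_eq_zero {z : ℝ} (hz : z ∈ X) {α : ι → ℝ}
    (hα : ValidWeight N β γ α) (h0 : ∑ i ∈ N, α i * deriv (h i) z = 0) :
    z ∈ YSet N h X β γ := by
  have hmin := (convexOn_weightedSum convex_univ hα.1 hconv).isMinOn_of_hasDerivAt_eq_zero
    (mem_univ z) (h0 ▸ hasDerivAt_weightedSum fun i hi => hdiff i hi z)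
  exact ⟨hz, α, hα, fun y _ => hmin (mem_univ y)⟩

lemma mem_YSet_of_zero_mem_segment {z : ℝ} (hz : z ∈ X) {α u : ι → ℝ}
    (hα : ValidWeight N β γ α) (hu₀ : ∀ i ∈ N, 0 ≤ u i) (hu₁ : ∑ i ∈ N, u i = 1)
    (huβ : ∀ i ∈ N, β ≤ u i)
    (h0 : (0 : ℝ) ∈ segment ℝ (∑ i ∈ N, α i * deriv (h i) z) (∑ i ∈ N, u i * deriv (h i) z)) :
    z ∈ YSet N h X β γ := by
  obtain ⟨a, b, ha, hb, hab, hsum⟩ := h0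
  refine mem_YSet_of_sum_deriv_eq_zero hconv hdiff hz (hα.smul_add_smul hu₀ hu₁ huβ ha hb hab) ?_
  simp only [Pi.add_apply, Pi.smul_apply, smul_eq_mul, add_mul, Finset.sum_add_distrib,
    mul_assoc, ← Finset.mul_sum]
  exact hsum

theorem convex_YSet (hX : Convex ℝ X) {u : ι → ℝ} (hu₀ : ∀ i ∈ N, 0 ≤ u i)
    (hu₁ : ∑ i ∈ N, u i = 1) (huβ : ∀ i ∈ N, β ≤ u i) : Convex ℝ (YSet N h X β γ) := by
  refine convex_iff_ordConnected.2 ⟨fun x₁ hx₁ x₂ hx₂ z hz => ?_⟩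
  rcases hz.1.eq_or_lt with rfl | hx₁z
  · exact hx₁
  rcases hz.2.eq_or_lt with rfl | hzx₂
  · exact hx₂
  obtain ⟨hx₁X, v₁, hv₁, hmin₁⟩ := hx₁
  obtain ⟨hx₂X, v₂, hv₂, hmin₂⟩ := hx₂
  have hzX : z ∈ X := hX.ordConnected.out hx₁X hx₂X hz
  have hderiv (α : ι → ℝ) := hasDerivAt_weightedSum (α := α) fun i hi => hdiff i hi z
  have hD₁ : 0 ≤ ∑ i ∈ N, v₁ i * deriv (h i) z :=
    (convexOn_weightedSum convex_univ hv₁.1 hconv).nonneg_of_hasDerivAt_of_le (mem_univ _)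
      (mem_univ _) hx₁z (hmin₁ z hzX) (hderiv v₁)
  have hD₂ : ∑ i ∈ N, v₂ i * deriv (h i) z ≤ 0 :=
    (convexOn_weightedSum convex_univ hv₂.1 hconv).nonpos_of_hasDerivAt_of_le (mem_univ _)
      (mem_univ _) hzx₂ (hmin₂ z hzX) (hderiv v₂)
  rcases le_total (∑ i ∈ N, u i * deriv (h i) z) 0 with hDu | hDu
  · refine mem_YSet_of_zero_mem_segment hconv hdiff hzX hv₁ hu₀ hu₁ huβ ?_
    exact segment_eq_uIcc (𝕜 := ℝ) _ _ ▸ mem_uIcc.2 (Or.inr ⟨hDu, hD₁⟩)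
  · refine mem_YSet_of_zero_mem_segment hconv hdiff hzX hv₂ hu₀ hu₁ huβ ?_
    exact segment_eq_uIcc (𝕜 := ℝ) _ _ ▸ mem_uIcc.2 (Or.inl ⟨hD₂, hDu⟩)

end Convexity

end YSet

theorem YSet_convex_isClosed_general {ι : Type*} (L : ℝ)
    (N : Finset ι) (hNne : N.Nonempty) (m : ℕ) (hm : N.card = m)
    (h : ι → ℝ → ℝ) (hadm : ∀ i ∈ N, Admissible L (h i))
    (X : Set ℝ) (hXcl : IsClosed X) (hXconv : Convex ℝ X)
    (β : ℝ) (hβ : β ≤ 1 / (m : ℝ)) (γ : ℕ) :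
    Convex ℝ (YSet N h X β γ) ∧ IsClosed (YSet N h X β γ) := by
  subst hm
  have hdiff : ∀ i ∈ N, Differentiable ℝ (h i) :=
    fun i hi => (hadm i hi).2.1.differentiable one_ne_zero
  have hcard : (N.card : ℝ) ≠ 0 := Nat.cast_ne_zero.2 hNne.card_pos.ne'
  have huniform : ∑ _i ∈ N, (1 / N.card : ℝ) = 1 := by
    rw [Finset.sum_const, nsmul_eq_mul, mul_one_div_cancel hcard]
  exact ⟨convex_YSet (fun i hi => (hadm i hi).1) hdiff hXconv (fun _ _ => by positivity) huniform
      fun _ _ => hβ,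
    isClosed_YSet (fun i hi => (hdiff i hi).continuous) hXcl⟩

/-- Lemma (convex B cons): if `β ≤ 1/|N|` and `γ ≤ |N|`, the set `Y(β,γ)` of
constrained optima of valid functions is convex and closed. -/
theorem YSet_convex_isClosed {ι : Type*} (L : ℝ) (hL : 0 < L)
    (N : Finset ι) (hNne : N.Nonempty) (m : ℕ) (hm : N.card = m)
    (h : ι → ℝ → ℝ) (hadm : ∀ i ∈ N, Admissible L (h i))
    (X : Set ℝ) (hXne : X.Nonempty) (hXcl : IsClosed X) (hXconv : Convex ℝ X)
    (β : ℝ) (hβ : β ≤ 1 / (m : ℝ)) (γ : ℕ) (hγ : γ ≤ m) :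
    Convex ℝ (YSet N h X β γ) ∧ IsClosed (YSet N h X β γ) :=
  YSet_convex_isClosed_general L N hNne m hm h hadm X hXcl hXconv β hβ γ
end

section
/- Fix a constant L > 0, a finite index set V, a nonempty subset N ⊆ V with |N| = m, and admissible functions h_i : ℝ → ℝ for i ∈ V. Let β be a real number with β ≤ 1/m and let γ be a natural number with γ ≤ m. Then the set X̃(β,γ) is convex and closed. -/
/-- A weight vector `α` over the index set `V` is `(β,γ)`-valid over `(V,N)` if
all weights are nonnegative, they sum (over `V`) to `1`, and at least `γ`
indices in `N` have weight at least `β`. -/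
def ValidWeightVN {ι : Type*} (V N : Finset ι) (β : ℝ) (γ : ℕ) (α : ι → ℝ) : Prop :=
  (∀ i ∈ V, 0 ≤ α i) ∧ (∑ i ∈ V, α i = 1) ∧
    ∃ S ⊆ N, γ ≤ S.card ∧ ∀ i ∈ S, β ≤ α i

/-- `X̃(β,γ)`: the union over all weight vectors `α` that are `(β,γ)`-valid over
`(V,N)` of the set of unconstrained global minimizers of
`x ↦ ∑_{i∈V} α_i h_i(x)`. -/
def XTildeSet {ι : Type*} (V N : Finset ι) (h : ι → ℝ → ℝ) (β : ℝ) (γ : ℕ) : Set ℝ :=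
  {x : ℝ | ∃ α : ι → ℝ, ValidWeightVN V N β γ α ∧
    ∀ y : ℝ, ∑ i ∈ V, α i * h i x ≤ ∑ i ∈ V, α i * h i y}

/-!
For weights `w` vanishing off `V`, a point `x` minimises `∑ wᵢ hᵢ` iff
`D w x := ∑ wᵢ hᵢ'(x) = 0`, and `D w` is monotone. The valid weights form a compact set that is
star-shaped about the uniform weight on `N` (this is where `β ≤ 1/m` and `γ ≤ m` enter), hence
connected; since `D w x` is continuous in `w`, the intermediate value theorem gives
`X̃ = {x | ∃ a, D a x ≤ 0} ∩ {x | ∃ b, 0 ≤ D b x}`. This is a lower set intersected with an upper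
set, hence an interval, and each piece is the projection of a closed set along the compact set of
weights, hence closed.
-/

open Set Finset

lemma IsCompact.isClosed_setOf_exists_mem {X Y : Type*} [TopologicalSpace X] [TopologicalSpace Y]
    {K : Set X} (hK : IsCompact K) {C : Set (X × Y)} (hC : IsClosed C) :
    IsClosed {y | ∃ x ∈ K, (x, y) ∈ C} := by
  have : CompactSpace K := isCompact_iff_compactSpace.mp hK
  have hC' : IsClosed {p : K × Y | ((p.1 : X), p.2) ∈ C} :=
    hC.preimage ((continuous_subtype_val.comp continuous_fst).prodMk continuous_snd)
  convert isClosedMap_snd_of_compactSpace _ hC' using 1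
  ext y
  simp

section

variable {ι : Type*}

section WeightedSum

variable (V : Finset ι) (h : ι → ℝ → ℝ)

noncomputable def weightedDeriv (w : ι → ℝ) (x : ℝ) : ℝ := ∑ i ∈ V, w i * deriv (h i) x

variable {V h}

lemma continuous_weightedDeriv (hc : ∀ i ∈ V, Continuous (deriv (h i))) :
    Continuous fun p : (ι → ℝ) × ℝ => weightedDeriv V h p.1 p.2 :=
  continuous_finsetSum V fun i hi =>
    ((continuous_apply i).comp continuous_fst).mul ((hc i hi).comp continuous_snd)

lemma hasDerivAt_weightedSum_s8 (hd : ∀ i ∈ V, Differentiable ℝ (h i)) (w : ι → ℝ) (x : ℝ) :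
    HasDerivAt (fun y => ∑ i ∈ V, w i * h i y) (weightedDeriv V h w x) x :=
  HasDerivAt.fun_sum fun i hi => (hd i hi x).hasDerivAt.const_mul (w i)

variable (hconv : ∀ i ∈ V, ConvexOn ℝ univ (h i)) (hd : ∀ i ∈ V, Differentiable ℝ (h i))
  {w : ι → ℝ} (hw : ∀ i ∈ V, 0 ≤ w i)
include hconv hd hw

lemma monotone_weightedDeriv : Monotone (weightedDeriv V h w) := fun _ _ hxy =>
  sum_le_sum fun i hi => mul_le_mul_of_nonneg_left
    ((hconv i hi).monotoneOn_deriv (fun x _ => hd i hi x) trivial trivial hxy) (hw i hi)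

lemma forall_weightedSum_le_iff {x : ℝ} :
    (∀ y, ∑ i ∈ V, w i * h i x ≤ ∑ i ∈ V, w i * h i y) ↔ weightedDeriv V h w x = 0 := by
  have hf := hasDerivAt_weightedSum_s8 hd w
  constructor
  · intro hmin
    exact (hf x).deriv.symm.trans (IsLocalMin.deriv_eq_zero (.of_forall hmin))
  · intro hzero y
    have hfconv : ConvexOn ℝ univ fun y => ∑ i ∈ V, w i * h i y :=
      Monotone.convexOn_univ_of_deriv (fun y => (hf y).differentiableAt)
        ((funext fun y => (hf y).deriv) ▸ monotone_weightedDeriv hconv hd hw)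
    refine hfconv.isMinOn_of_rightDeriv_eq_zero (by simp) ?_ (mem_univ y)
    rw [(hf x).hasDerivWithinAt.derivWithin (uniqueDiffWithinAt_Ioi x), hzero]

end WeightedSum

section Weights

variable (V N : Finset ι) (β : ℝ) (γ : ℕ)

-- Vanishing off `V` changes no weighted sum over `V` but makes the set compact.
def validWeightSet : Set (ι → ℝ) := {w | ValidWeightVN V N β γ w ∧ ∀ i ∉ V, w i = 0}

lemma isClosed_validWeightSet : IsClosed (validWeightSet V N β γ) := by
  have hS : IsClosed {w : ι → ℝ | ∃ S ⊆ N, γ ≤ #S ∧ ∀ i ∈ S, β ≤ w i} := by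
    have hfin : {S : Finset ι | S ⊆ N ∧ γ ≤ #S}.Finite :=
      N.powerset.finite_toSet.subset fun S hS => mem_powerset.2 hS.1
    convert hfin.isClosed_biUnion fun S _ => isClosed_biInter fun i (_ : i ∈ S) =>
      (isClosed_le continuous_const (continuous_apply i) : IsClosed {w : ι → ℝ | β ≤ w i})
    ext; simp [and_assoc]
  have hsum : IsClosed {w : ι → ℝ | ∑ i ∈ V, w i = 1} :=
    isClosed_eq (continuous_finsetSum V fun i _ => continuous_apply i) continuous_const
  simp only [validWeightSet, ValidWeightVN, ofPred_and, ofPred_forall]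
  exact ((isClosed_biInter fun i _ => isClosed_le continuous_const (continuous_apply i)).inter
    (hsum.inter hS)).inter
      (isClosed_biInter fun i _ => isClosed_eq (continuous_apply i) continuous_const)

lemma validWeightSet_subset_pi_Icc : validWeightSet V N β γ ⊆ univ.pi fun _ => Icc 0 1 := by
  rintro w ⟨⟨hw0, hw1, -⟩, hwV⟩ i -
  by_cases hi : i ∈ V
  · exact ⟨hw0 i hi, hw1 ▸ single_le_sum hw0 hi⟩
  · simp [hwV i hi]

lemma isCompact_validWeightSet : IsCompact (validWeightSet V N β γ) :=
  (isCompact_univ_pi fun _ => isCompact_Icc).of_isClosed_subset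
    (isClosed_validWeightSet V N β γ) (validWeightSet_subset_pi_Icc V N β γ)

variable {V N β γ}

lemma ValidWeightVN.exists_mem_validWeightSet_eqOn (hNV : N ⊆ V) {α : ι → ℝ}
    (hα : ValidWeightVN V N β γ α) : ∃ w ∈ validWeightSet V N β γ, EqOn w α V := by
  obtain ⟨hα0, hα1, S, hSN, hSγ, hSβ⟩ := hα
  have hw : EqOn ((V : Set ι).indicator α) α V := fun i hi => indicator_of_mem hi α
  refine ⟨(V : Set ι).indicator α, ⟨⟨fun i hi => hw hi ▸ hα0 i hi, ?_, S, hSN, hSγ,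
    fun i hi => hw (hNV (hSN hi)) ▸ hSβ i hi⟩, fun i hi => indicator_of_notMem hi α⟩, hw⟩
  rw [← hα1]
  exact sum_congr rfl fun i hi => hw hi

lemma starConvex_validWeightSet {u : ι → ℝ} (hu : u ∈ validWeightSet V N β γ)
    (huN : ∀ i ∈ N, β ≤ u i) : StarConvex ℝ u (validWeightSet V N β γ) := by
  obtain ⟨⟨hu0, hu1, -⟩, huV⟩ := hu
  rintro w ⟨⟨hw0, hw1, S, hSN, hSγ, hSβ⟩, hwV⟩ a b ha hb hab
  refine ⟨⟨fun i hi => ?_, ?_, S, hSN, hSγ, fun i hi => ?_⟩, fun i hi => ?_⟩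
  · simp only [Pi.add_apply, Pi.smul_apply, smul_eq_mul]
    exact add_nonneg (mul_nonneg ha (hu0 i hi)) (mul_nonneg hb (hw0 i hi))
  · simp only [Pi.add_apply, Pi.smul_apply, smul_eq_mul, sum_add_distrib, ← mul_sum, hu1, hw1]
    simpa using hab
  · simp only [Pi.add_apply, Pi.smul_apply, smul_eq_mul]
    calc β = a * β + b * β := by rw [← add_mul, hab, one_mul]
      _ ≤ a * u i + b * w i := add_le_add (mul_le_mul_of_nonneg_left (huN i (hSN hi)) ha)
          (mul_le_mul_of_nonneg_left (hSβ i hi) hb)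
  · simp [huV i hi, hwV i hi]

lemma isPreconnected_validWeightSet (hNV : N ⊆ V) (hN : N.Nonempty) (hβ : β ≤ (#N : ℝ)⁻¹)
    (hγ : γ ≤ #N) : IsPreconnected (validWeightSet V N β γ) := by
  set u : ι → ℝ := (N : Set ι).indicator fun _ => (#N : ℝ)⁻¹
  have huN : ∀ i ∈ N, u i = (#N : ℝ)⁻¹ := fun i hi => indicator_of_mem (mem_coe.2 hi) _
  obtain ⟨S, hSN, hSγ⟩ := exists_subset_card_eq hγ
  have hu : u ∈ validWeightSet V N β γ := by
    refine ⟨⟨fun i _ => indicator_nonneg (fun _ _ => by positivity) i, ?_, S, hSN, hSγ.ge,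
      fun i hi => huN i (hSN hi) ▸ hβ⟩, fun i hi => indicator_of_notMem (mt (@hNV i) hi) _⟩
    rw [sum_indicator_subset _ hNV, sum_const, nsmul_eq_mul]
    exact mul_inv_cancel₀ (by exact_mod_cast hN.card_pos.ne')
  have hstar := starConvex_validWeightSet hu fun i hi => huN i hi ▸ hβ
  exact (hstar.isPathConnected hu).isConnected.isPreconnected

end Weights

section XTilde

variable {V N : Finset ι} {h : ι → ℝ → ℝ} {β : ℝ} {γ : ℕ}
  (hconv : ∀ i ∈ V, ConvexOn ℝ univ (h i)) (hd : ∀ i ∈ V, Differentiable ℝ (h i))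
include hconv hd

lemma mem_XTildeSet_iff (hNV : N ⊆ V) {x : ℝ} :
    x ∈ XTildeSet V N h β γ ↔ ∃ w ∈ validWeightSet V N β γ, weightedDeriv V h w x = 0 := by
  constructor
  · rintro ⟨α, hα, hmin⟩
    obtain ⟨w, hw, hwα⟩ := hα.exists_mem_validWeightSet_eqOn hNV
    have hsum (y : ℝ) : ∑ i ∈ V, w i * h i y = ∑ i ∈ V, α i * h i y :=
      sum_congr rfl fun i hi => by rw [hwα hi]
    exact ⟨w, hw, (forall_weightedSum_le_iff hconv hd hw.1.1).1 (by simpa only [hsum] using hmin)⟩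
  · rintro ⟨w, hw, hwx⟩
    exact ⟨w, hw.1, (forall_weightedSum_le_iff hconv hd hw.1.1).2 hwx⟩

lemma XTildeSet_eq_inter (hNV : N ⊆ V) (hW : IsPreconnected (validWeightSet V N β γ)) :
    XTildeSet V N h β γ =
      {x | ∃ a ∈ validWeightSet V N β γ, weightedDeriv V h a x ≤ 0} ∩
        {x | ∃ b ∈ validWeightSet V N β γ, 0 ≤ weightedDeriv V h b x} := by
  ext x
  rw [mem_XTildeSet_iff hconv hd hNV]
  constructor
  · rintro ⟨w, hw, hwx⟩
    exact ⟨⟨w, hw, hwx.le⟩, w, hw, hwx.ge⟩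
  · rintro ⟨⟨a, ha, hax⟩, b, hb, hbx⟩
    have hcont : Continuous fun w : ι → ℝ => weightedDeriv V h w x :=
      continuous_finsetSum V fun i _ => (continuous_apply i).mul continuous_const
    exact hW.intermediate_value ha hb hcont.continuousOn ⟨hax, hbx⟩

end XTilde

end

theorem XTildeSet_convex_isClosed_general {ι : Type*} (L : ℝ)
    (V N : Finset ι) (hNV : N ⊆ V) (hNne : N.Nonempty) (m : ℕ) (hm : N.card = m)
    (h : ι → ℝ → ℝ) (hadm : ∀ i ∈ V, Admissible L (h i))
    (β : ℝ) (hβ : β ≤ 1 / (m : ℝ)) (γ : ℕ) (hγ : γ ≤ m) :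
    Convex ℝ (XTildeSet V N h β γ) ∧ IsClosed (XTildeSet V N h β γ) := by
  subst hm
  have hconv (i) (hi : i ∈ V) : ConvexOn ℝ univ (h i) := (hadm i hi).1
  have hd (i) (hi : i ∈ V) : Differentiable ℝ (h i) := (hadm i hi).2.1.differentiable one_ne_zero
  have hD := continuous_weightedDeriv fun i hi => (hadm i hi).2.1.continuous_deriv_one
  have hW := isCompact_validWeightSet V N β γ
  rw [XTildeSet_eq_inter hconv hd hNV
    (isPreconnected_validWeightSet hNV hNne (one_div (N.card : ℝ) ▸ hβ) hγ)]
  refine ⟨OrdConnected.convex (OrdConnected.inter ?_ ?_),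
    (hW.isClosed_setOf_exists_mem (isClosed_le hD continuous_const)).inter
      (hW.isClosed_setOf_exists_mem (isClosed_le continuous_const hD))⟩
  · exact IsLowerSet.ordConnected fun x y hyx ⟨a, ha, hax⟩ =>
      ⟨a, ha, (monotone_weightedDeriv hconv hd ha.1.1 hyx).trans hax⟩
  · exact IsUpperSet.ordConnected fun x y hxy ⟨b, hb, hbx⟩ =>
      ⟨b, hb, hbx.trans (monotone_weightedDeriv hconv hd hb.1.1 hxy)⟩

/-- Lemma (convex C1): if `β ≤ 1/|N|` and `γ ≤ |N|`, the set `X̃(β,γ)` is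
convex and closed. -/
theorem XTildeSet_convex_isClosed {ι : Type*} (L : ℝ) (hL : 0 < L)
    (V N : Finset ι) (hNV : N ⊆ V) (hNne : N.Nonempty) (m : ℕ) (hm : N.card = m)
    (h : ι → ℝ → ℝ) (hadm : ∀ i ∈ V, Admissible L (h i))
    (β : ℝ) (hβ : β ≤ 1 / (m : ℝ)) (γ : ℕ) (hγ : γ ≤ m) :
    Convex ℝ (XTildeSet V N h β γ) ∧ IsClosed (XTildeSet V N h β γ) :=
  XTildeSet_convex_isClosed_general L V N hNV hNne m hm h hadm β hβ γ hγ
end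

section
/- Let ι be a finite index type, S a nonempty finite subset of ι, and A₁, …, A_k real square matrices indexed by ι such that for every r ∈ {1,…,k} and every α ∈ S: (A_r)_{αj} ≥ 0 for all j, ∑_{j∈S} (A_r)_{αj} = 1, and (A_r)_{αj} = 0 for every j ∉ S. Then δ_S(A_k·A_{k−1}⋯A₁) ≤ ∏_{r=1}^{k} (1 − η_S(A_r)). -/
/-- `δ_S(A) = max_{β∈S} max_{α,α'∈S} |A_{αβ} − A_{α'β}|`. -/
noncomputable def deltaS {ι : Type*} [Fintype ι] (S : Finset ι) (hS : S.Nonempty)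
    (A : Matrix ι ι ℝ) : ℝ :=
  S.sup' hS fun β => S.sup' hS fun α => S.sup' hS fun α' => |A α β - A α' β|

/-- `η_S(A) = min_{α,α'∈S} ∑_{β∈S} min(A_{αβ}, A_{α'β})`. -/
noncomputable def etaS {ι : Type*} [Fintype ι] (S : Finset ι) (hS : S.Nonempty)
    (A : Matrix ι ι ℝ) : ℝ :=
  S.inf' hS fun α => S.inf' hS fun α' => ∑ β ∈ S, min (A α β) (A α' β)

/-- The backward product `A_k·A_{k−1}⋯A₁` (with `prodA A 0 = 1`, the identity). -/
def prodA {ι : Type*} [Fintype ι] [DecidableEq ι] (A : ℕ → Matrix ι ι ℝ) :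
    ℕ → Matrix ι ι ℝ
  | 0 => 1
  | k + 1 => A (k + 1) * prodA A k

section Aux

variable {ι : Type*} [Fintype ι] (S : Finset ι) (hS : S.Nonempty)

lemma abs_le_deltaS (A : Matrix ι ι ℝ) {α α' β : ι} (hα : α ∈ S) (hα' : α' ∈ S)
    (hβ : β ∈ S) : |A α β - A α' β| ≤ deltaS S hS A :=
  le_trans (le_trans (Finset.le_sup' (fun α' => |A α β - A α' β|) hα')
      (Finset.le_sup' (fun α => S.sup' hS fun α' => |A α β - A α' β|) hα))
    (Finset.le_sup' (fun β => S.sup' hS fun α => S.sup' hS fun α' => |A α β - A α' β|) hβ)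

lemma deltaS_nonneg (A : Matrix ι ι ℝ) : 0 ≤ deltaS S hS A := by
  obtain ⟨a, ha⟩ := id hS
  have := abs_le_deltaS S hS A ha ha ha
  simpa using this

lemma etaS_le_one (A : Matrix ι ι ℝ)
    (hA : ∀ α ∈ S, (∀ j : ι, 0 ≤ A α j) ∧ (∑ j ∈ S, A α j = 1) ∧
      (∀ j : ι, j ∉ S → A α j = 0)) : etaS S hS A ≤ 1 := by
  obtain ⟨a, ha⟩ := id hS
  have h1 : etaS S hS A ≤ ∑ β ∈ S, min (A a β) (A a β) :=
    le_trans (Finset.inf'_le _ ha) (Finset.inf'_le _ ha)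
  simpa [(hA a ha).2.1] using h1

lemma deltaS_mul_le (A B : Matrix ι ι ℝ)
    (hA : ∀ α ∈ S, (∀ j : ι, 0 ≤ A α j) ∧ (∑ j ∈ S, A α j = 1) ∧
      (∀ j : ι, j ∉ S → A α j = 0)) :
    deltaS S hS (A * B) ≤ (1 - etaS S hS A) * deltaS S hS B := by
  have heta1 : etaS S hS A ≤ 1 := etaS_le_one S hS A hA
  -- one-sided bound
  have key : ∀ β ∈ S, ∀ α ∈ S, ∀ α' ∈ S,
      (A * B) α β - (A * B) α' β ≤ (1 - etaS S hS A) * deltaS S hS B := by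
    intro β hβ α hα α' hα'
    set m : ι → ℝ := fun j => min (A α j) (A α' j) with hm
    set M : ℝ := S.sup' hS (fun j => B j β) with hM
    set L : ℝ := S.inf' hS (fun j => B j β) with hL
    set c : ℝ := 1 - ∑ j ∈ S, m j with hc
    have hrestr : ∀ γ, γ ∈ S → (A * B) γ β = ∑ j ∈ S, A γ j * B j β := by
      intro γ hγ
      rw [Matrix.mul_apply]
      exact (Finset.sum_subset S.subset_univ
        (fun j _ hj => by rw [(hA γ hγ).2.2 j hj]; ring)).symm
    have hmα : ∀ j, m j ≤ A α j := fun j => min_le_left _ _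
    have hmα' : ∀ j, m j ≤ A α' j := fun j => min_le_right _ _
    have hcα : ∑ j ∈ S, (A α j - m j) = c := by
      rw [Finset.sum_sub_distrib, (hA α hα).2.1, hc]
    have hcα' : ∑ j ∈ S, (A α' j - m j) = c := by
      rw [Finset.sum_sub_distrib, (hA α' hα').2.1, hc]
    have hup : ∑ j ∈ S, A α j * B j β ≤ ∑ j ∈ S, m j * B j β + c * M := by
      have hsplit : ∑ j ∈ S, A α j * B j β
          = ∑ j ∈ S, m j * B j β + ∑ j ∈ S, (A α j - m j) * B j β := by
        rw [← Finset.sum_add_distrib]; exact Finset.sum_congr rfl fun j _ => by ring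
      rw [hsplit]
      gcongr with j hj
      calc ∑ j ∈ S, (A α j - m j) * B j β ≤ ∑ j ∈ S, (A α j - m j) * M := by
            apply Finset.sum_le_sum
            intro j hj
            exact mul_le_mul_of_nonneg_left (Finset.le_sup' (fun j => B j β) hj)
              (sub_nonneg.2 (hmα j))
        _ = c * M := by rw [← Finset.sum_mul, hcα]
    have hlo : ∑ j ∈ S, m j * B j β + c * L ≤ ∑ j ∈ S, A α' j * B j β := by
      have hsplit : ∑ j ∈ S, A α' j * B j β
          = ∑ j ∈ S, m j * B j β + ∑ j ∈ S, (A α' j - m j) * B j β := by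
        rw [← Finset.sum_add_distrib]; exact Finset.sum_congr rfl fun j _ => by ring
      rw [hsplit]
      gcongr with j hj
      calc c * L = ∑ j ∈ S, (A α' j - m j) * L := by rw [← Finset.sum_mul, hcα']
        _ ≤ ∑ j ∈ S, (A α' j - m j) * B j β := by
            apply Finset.sum_le_sum
            intro j hj
            exact mul_le_mul_of_nonneg_left (Finset.inf'_le (fun j => B j β) hj)
              (sub_nonneg.2 (hmα' j))
    have hdiff : (A * B) α β - (A * B) α' β ≤ c * (M - L) := by
      rw [hrestr α hα, hrestr α' hα']
      have := sub_le_sub hup hlo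
      calc ∑ j ∈ S, A α j * B j β - ∑ j ∈ S, A α' j * B j β
          ≤ (∑ j ∈ S, m j * B j β + c * M) - (∑ j ∈ S, m j * B j β + c * L) :=
            sub_le_sub hup hlo
        _ = c * (M - L) := by ring
    have hML0 : 0 ≤ M - L := by
      obtain ⟨a, ha⟩ := id hS
      have h1 : L ≤ B a β := Finset.inf'_le (fun j => B j β) ha
      have h2 : B a β ≤ M := Finset.le_sup' (fun j => B j β) ha
      linarith
    have hMLd : M - L ≤ deltaS S hS B := by
      obtain ⟨j0, hj0, hj0e⟩ := Finset.exists_mem_eq_sup' hS (fun j => B j β)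
      obtain ⟨j1, hj1, hj1e⟩ := Finset.exists_mem_eq_inf' hS (fun j => B j β)
      have := abs_le_deltaS S hS B hj0 hj1 hβ
      calc M - L = B j0 β - B j1 β := by rw [hM, hL, hj0e, hj1e]
        _ ≤ |B j0 β - B j1 β| := le_abs_self _
        _ ≤ deltaS S hS B := this
    have hceta : c ≤ 1 - etaS S hS A := by
      have : etaS S hS A ≤ ∑ j ∈ S, m j :=
        le_trans (Finset.inf'_le _ hα) (Finset.inf'_le _ hα')
      simp only [hc]; linarith
    calc (A * B) α β - (A * B) α' β ≤ c * (M - L) := hdiff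
      _ ≤ (1 - etaS S hS A) * (M - L) := mul_le_mul_of_nonneg_right hceta hML0
      _ ≤ (1 - etaS S hS A) * deltaS S hS B :=
          mul_le_mul_of_nonneg_left hMLd (by linarith)
  apply Finset.sup'_le; intro β hβ
  apply Finset.sup'_le; intro α hα
  apply Finset.sup'_le; intro α' hα'
  exact abs_sub_le_iff.2 ⟨key β hβ α hα α' hα', key β hβ α' hα' α hα⟩

lemma deltaS_one_le [DecidableEq ι] : deltaS S hS (1 : Matrix ι ι ℝ) ≤ 1 := by
  apply Finset.sup'_le; intro β hβ
  apply Finset.sup'_le; intro α hα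
  apply Finset.sup'_le; intro α' hα'
  simp only [Matrix.one_apply]
  split_ifs <;> norm_num

end Aux

/-- Chained contraction bound: if each `A_r` (for `1 ≤ r ≤ k`) has rows indexed
by `S` that are nonnegative, sum to `1` over `S`, and vanish outside `S`, then
`δ_S(A_k⋯A₁) ≤ ∏_{r=1}^{k} (1 − η_S(A_r))`. -/
theorem deltaS_prod_le {ι : Type*} [Fintype ι] [DecidableEq ι]
    (S : Finset ι) (hS : S.Nonempty) (k : ℕ) (A : ℕ → Matrix ι ι ℝ)
    (hA : ∀ r : ℕ, 1 ≤ r → r ≤ k → ∀ α ∈ S,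
      (∀ j : ι, 0 ≤ A r α j) ∧ (∑ j ∈ S, A r α j = 1) ∧
        (∀ j : ι, j ∉ S → A r α j = 0)) :
    deltaS S hS (prodA A k) ≤ ∏ r ∈ Finset.Icc 1 k, (1 - etaS S hS (A r)) := by
  induction k with
  | zero => simpa [prodA] using deltaS_one_le S hS
  | succ k ih =>
    have hAk1 : ∀ α ∈ S, (∀ j : ι, 0 ≤ A (k + 1) α j) ∧
        (∑ j ∈ S, A (k + 1) α j = 1) ∧ (∀ j : ι, j ∉ S → A (k + 1) α j = 0) :=
      hA (k + 1) (by omega) le_rfl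
    have ih' := ih (fun r h1 h2 => hA r h1 (by omega))
    have heta : etaS S hS (A (k + 1)) ≤ 1 := etaS_le_one S hS _ hAk1
    have hstep : deltaS S hS (prodA A (k + 1))
        ≤ (1 - etaS S hS (A (k + 1))) * deltaS S hS (prodA A k) :=
      deltaS_mul_le S hS _ _ hAk1
    have hprod : ∏ r ∈ Finset.Icc 1 (k + 1), (1 - etaS S hS (A r))
        = (∏ r ∈ Finset.Icc 1 k, (1 - etaS S hS (A r))) * (1 - etaS S hS (A (k + 1))) :=
      Finset.prod_Icc_succ_top (by omega) _
    rw [hprod]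
    calc deltaS S hS (prodA A (k + 1))
        ≤ (1 - etaS S hS (A (k + 1))) * deltaS S hS (prodA A k) := hstep
      _ ≤ (1 - etaS S hS (A (k + 1))) * ∏ r ∈ Finset.Icc 1 k, (1 - etaS S hS (A r)) :=
          mul_le_mul_of_nonneg_left ih' (by linarith)
      _ = _ := by ring
end
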